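/- arXiv:1601.03291 — 4 statements merged into one kernel-verified Lean document; each statement's English description precedes it below -/
import Mathlib

section
/- Let A_1,…,A_m be pairwise distinct nonempty subsets of {1,…,k+1} such that the intersection ∩_{i=1}^m H_{A_i} is non-contractible, i.e., for every index i_0 the intersection of the H_{A_i} over all i ≠ i_0 is strictly larger than the intersection over all i. Then ∩_{i=1}^m H_{A_i} is a normal subgroup of G_k of index 2^m. -/
open scoped Classical

/-- `Gk k` is the free product of `k+1` copies of the cyclic group of order two. -/
abbrev Gk (k : ℕ) : Type :=
  Monoid.CoprodI (fun _ : Fin (k + 1) => Multiplicative (ZMod 2))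

/-- The canonical generator `a_i` of `Gk k`. -/
def gen (k : ℕ) (i : Fin (k + 1)) : Gk k :=
  Monoid.CoprodI.of (M := fun _ : Fin (k + 1) => Multiplicative (ZMod 2)) (i := i)
    (Multiplicative.ofAdd (1 : ZMod 2))

/-- The homomorphism `φ_A : Gk k →* Multiplicative (ZMod 2)` sending `a_i` to
`Multiplicative.ofAdd 1` if `i ∈ A` and to `1` otherwise. -/
noncomputable def phi (k : ℕ) (A : Set (Fin (k + 1))) : Gk k →* Multiplicative (ZMod 2) :=
  Monoid.CoprodI.lift (fun i => if i ∈ A then MonoidHom.id (Multiplicative (ZMod 2)) else 1)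

/-- The subgroup `H_A = ker φ_A`. -/
noncomputable def HA (k : ℕ) (A : Set (Fin (k + 1))) : Subgroup (Gk k) :=
  (phi k A).ker

theorem stmt2 (k m : ℕ) (A : Fin m → Set (Fin (k + 1)))
    (hne : ∀ i, (A i).Nonempty)
    (hdist : Function.Injective A)
    (hnc : ∀ i₀ : Fin m,
      (⨅ i, HA k (A i)) < ⨅ i ∈ ({i₀}ᶜ : Set (Fin m)), HA k (A i)) :
    (⨅ i, HA k (A i)).Normal ∧ (⨅ i, HA k (A i)).index = 2 ^ m := by
  set Φ : Gk k →* (Fin m → Multiplicative (ZMod 2)) :=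
    Pi.monoidHom (fun i => phi k (A i)) with hΦ
  have hker : (⨅ i, HA k (A i)) = Φ.ker := by
    ext x
    simp [Subgroup.mem_iInf, HA, MonoidHom.mem_ker, hΦ, Pi.monoidHom, funext_iff]
  -- For each i₀, find an element mapping to the i₀-th "basis vector".
  have hbasis : ∀ i₀ : Fin m, ∃ x : Gk k,
      (∀ i ≠ i₀, phi k (A i) x = 1) ∧ phi k (A i₀) x = Multiplicative.ofAdd 1 := by
    intro i₀
    obtain ⟨x, hx1, hx2⟩ := SetLike.exists_of_lt (hnc i₀)
    simp only [Subgroup.mem_iInf, Set.mem_compl_iff, Set.mem_singleton_iff] at hx1 hx2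
    push_neg at hx2
    obtain ⟨j, hj⟩ := hx2
    have hji : j = i₀ := by
      by_contra h
      exact hj (hx1 j h)
    subst hji
    refine ⟨x, fun i hi => hx1 i hi, ?_⟩
    have : phi k (A j) x ≠ 1 := fun h => hj (by simpa [HA, MonoidHom.mem_ker] using h)
    revert this
    generalize phi k (A j) x = a
    revert a; decide
  have hsurj : Function.Surjective Φ := by
    intro v
    choose x hx1 hx2 using hbasis
    refine ⟨((List.finRange m).map (fun i₀ => x i₀ ^ (Multiplicative.toAdd (v i₀)).val)).prod, ?_⟩
    funext j
    have : Φ (((List.finRange m).map (fun i₀ => x i₀ ^ (Multiplicative.toAdd (v i₀)).val)).prod) j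
        = ∏ i₀ : Fin m, (phi k (A j) (x i₀)) ^ (Multiplicative.toAdd (v i₀)).val := by
      rw [map_list_prod, Fin.prod_univ_def]
      rw [List.map_map, Pi.list_prod_apply, List.map_map]
      simp [hΦ, Pi.monoidHom, Function.comp_def]
    rw [this, Finset.prod_eq_single j]
    · rw [hx2 j]
      generalize v j = a
      revert a; decide
    · intro i _ hij
      rw [hx1 i j hij.symm, one_pow]
    · simp
  constructor
  · rw [hker]; exact Φ.normal_ker
  · rw [hker, Subgroup.index_ker]
    have : Φ.range = ⊤ := MonoidHom.range_eq_top.mpr hsurj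
    rw [this]
    simp only [Nat.card_congr (Subgroup.topEquiv.toEquiv)]
    rw [Nat.card_pi]
    simp [Nat.card_eq_fintype_card]
end

section
/- Let φ be a group homomorphism from G_k to a finite commutative group G. Then there exist finitely many subsets A_1,…,A_m of {1,…,k+1} such that the kernel of φ equals the intersection H_{A_1} ∩ … ∩ H_{A_m}. -/
open scoped Classical

/-! Every generator `a_i` squares to `1`, so the image of `φ` is a group of exponent `2`, i.e. an
`𝔽₂`-vector space, whose dual separates points. Hence `ker φ` is the intersection of the kernels of
the homomorphisms `G_k → 𝔽₂` containing it, and each of these is some `φ_A`, determined by the set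
`A` of generators it does not kill. There are only finitely many such `A`. -/

theorem CommGroup.exists_hom_zmod_two_ne_one {H : Type*} [CommGroup H]
    (hH : ∀ h : H, h ^ 2 = 1) {v : H} (hv : v ≠ 1) :
    ∃ χ : H →* Multiplicative (ZMod 2), χ v ≠ 1 := by
  let _ : Module (ZMod 2) (Additive H) := AddCommGroup.zmodModule fun h => hH h.toMul
  obtain ⟨f, hf⟩ := Module.Projective.exists_dual_ne_zero (ZMod 2) (x := Additive.ofMul v) hv
  exact ⟨AddMonoidHom.toMultiplicativeRight f.toAddMonoidHom, hf⟩

theorem MonoidHom.exists_hom_zmod_two_of_notMem_ker {M G : Type*} [Group M] [CommGroup G]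
    (φ : M →* G) (hφ : ∀ x, φ x ^ 2 = 1) {x : M} (hx : x ∉ φ.ker) :
    ∃ ψ : M →* Multiplicative (ZMod 2), φ.ker ≤ ψ.ker ∧ ψ x ≠ 1 := by
  have hrange : ∀ h : φ.range, h ^ 2 = 1 := by
    rintro ⟨_, y, rfl⟩
    exact Subtype.ext (hφ y)
  obtain ⟨χ, hχ⟩ := CommGroup.exists_hom_zmod_two_ne_one hrange
    (v := φ.rangeRestrict x) fun h => hx (by simpa [Subtype.ext_iff] using h)
  refine ⟨χ.comp φ.rangeRestrict, fun y hy => ?_, hχ⟩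
  rw [← MonoidHom.ker_rangeRestrict, MonoidHom.mem_ker] at hy
  simp [hy]

namespace Monoid.CoprodI

theorem sq_map_eq_one {ι : Type*} {M : ι → Type*} [∀ i, Monoid (M i)] {G : Type*} [CommMonoid G]
    (hM : ∀ i (m : M i), m ^ 2 = 1) (φ : CoprodI M →* G) (x : CoprodI M) : φ x ^ 2 = 1 := by
  induction x using induction_on with
  | one => simp
  | of i m => rw [← map_pow, ← map_pow, hM, map_one, map_one]
  | mul a b ha hb => rw [map_mul, mul_pow, ha, hb, mul_one]

end Monoid.CoprodI

theorem Multiplicative.zmod_two_eq_one_or (x : Multiplicative (ZMod 2)) :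
    x = 1 ∨ x = Multiplicative.ofAdd 1 := by
  revert x; decide

theorem phi_gen (k : ℕ) (A : Set (Fin (k + 1))) (i : Fin (k + 1)) :
    phi k A (gen k i) = if i ∈ A then Multiplicative.ofAdd 1 else 1 := by
  rw [phi, gen, Monoid.CoprodI.lift_of]
  split_ifs <;> rfl

theorem eq_phi_setOf_ne_one (k : ℕ) (ψ : Gk k →* Multiplicative (ZMod 2)) :
    ψ = phi k {i | ψ (gen k i) ≠ 1} := by
  refine Monoid.CoprodI.ext_hom _ _ fun i => MonoidHom.ext fun m => ?_
  rcases Multiplicative.zmod_two_eq_one_or m with rfl | rfl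
  · simp
  · change ψ (gen k i) = phi k _ (gen k i)
    rw [phi_gen]
    split_ifs with hi
    · exact (Multiplicative.zmod_two_eq_one_or _).resolve_left hi
    · exact not_not.mp hi

theorem ker_eq_iInf_HA (k : ℕ) {G : Type*} [CommGroup G] (φ : Gk k →* G) :
    φ.ker = ⨅ A : {A // φ.ker ≤ HA k A}, HA k A := by
  refine le_antisymm (le_iInf fun A => A.2) fun x hx => ?_
  by_contra hxφ
  have hsq := Monoid.CoprodI.sq_map_eq_one (fun _ m => by revert m; decide) φ
  obtain ⟨ψ, hker, hψx⟩ := φ.exists_hom_zmod_two_of_notMem_ker hsq hxφ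
  rw [eq_phi_setOf_ne_one k ψ] at hker hψx
  exact hψx (Subgroup.mem_iInf.mp hx ⟨_, hker⟩)

theorem stmt6_general (k : ℕ) (G : Type) [CommGroup G]
    (φ : Gk k →* G) :
    ∃ (m : ℕ) (A : Fin m → Set (Fin (k + 1))),
      φ.ker = ⨅ i, HA k (A i) := by
  obtain ⟨m, ⟨e⟩⟩ := Finite.exists_equiv_fin {A // φ.ker ≤ HA k A}
  refine ⟨m, fun i => e.symm i, ?_⟩
  rw [e.symm.surjective.iInf_comp fun A => HA k A.1]
  exact ker_eq_iInf_HA k φ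

theorem stmt6 (k : ℕ) (G : Type) [CommGroup G] [Finite G]
    (φ : Gk k →* G) :
    ∃ (m : ℕ) (A : Fin m → Set (Fin (k + 1))),
      φ.ker = ⨅ i, HA k (A i) :=
  stmt6_general k G φ
end

section
/- In the infinite dihedral group D = ℤ/2 * ℤ/2 (the free product of two copies of the cyclic group of order two, with canonical generators a and b), an element x belongs to the subgroup generated by {aba, bab} if and only if the length of the reduced word representing x is divisible by 3. -/
/-- `D` is the infinite dihedral group: the free product of two copies of the
cyclic group of order two. -/
abbrev D : Type := Monoid.CoprodI (fun _ : Fin 2 => Multiplicative (ZMod 2))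

/-- The first canonical generator `a` of `D`. -/
def genD_a : D :=
  Monoid.CoprodI.of (M := fun _ : Fin 2 => Multiplicative (ZMod 2)) (i := (0 : Fin 2))
    (Multiplicative.ofAdd (1 : ZMod 2))

/-- The second canonical generator `b` of `D`. -/
def genD_b : D :=
  Monoid.CoprodI.of (M := fun _ : Fin 2 => Multiplicative (ZMod 2)) (i := (1 : Fin 2))
    (Multiplicative.ofAdd (1 : ZMod 2))

/-!
Send `a` and `b` to the transpositions `(0 1)` and `(0 2)` of `Fin 3`; this realises `D` acting
on the three cosets of `H = ⟨aba, bab⟩`, and `H` lands in the stabiliser of `0`. A reduced word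
is an alternating product `s t s t ⋯` of the two generators, and its image fixes `0` exactly
when its length is divisible by `3`, because `(0 1)(0 2)` is a `3`-cycle. Conversely, a reduced
word of length `3k` is a product of `k` blocks `aba` or `bab`.
-/
open Monoid

section AltProd

variable {M N : Type*} [Monoid M] [Monoid N]

def altProd (g : Fin 2 → M) : Fin 2 → ℕ → M
  | _, 0 => 1
  | s, n + 1 => g s * altProd g (s + 1) n

variable (g : Fin 2 → M)

@[simp]
theorem altProd_zero (s : Fin 2) : altProd g s 0 = 1 := rfl

theorem altProd_succ (s : Fin 2) (n : ℕ) : altProd g s (n + 1) = g s * altProd g (s + 1) n := rfl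

open Fin.NatCast in
theorem altProd_add (s : Fin 2) (m n : ℕ) :
    altProd g s (m + n) = altProd g s m * altProd g (s + (m : Fin 2)) n := by
  induction m generalizing s with
  | zero => simp
  | succ m ih =>
    rw [Nat.add_right_comm, altProd_succ, altProd_succ, ih, mul_assoc, Nat.cast_succ,
      add_comm (m : Fin 2) 1, add_assoc]

theorem map_altProd (f : M →* N) (s : Fin 2) (n : ℕ) :
    f (altProd g s n) = altProd (f ∘ g) s n := by
  induction n generalizing s with
  | zero => simp
  | succ n ih => simp [altProd_succ, ih]

end AltProd

def zmodPowHom {M : Type*} [Monoid M] (n : ℕ) [NeZero n] {g : M} (hg : g ^ n = 1) :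
    Multiplicative (ZMod n) →* M where
  toFun k := g ^ k.toAdd.val
  map_one' := by simp
  map_mul' k l := by simp only [toAdd_mul, ZMod.val_add, ← pow_eq_pow_mod _ hg, pow_add]

theorem zmodPowHom_ofAdd_one {M : Type*} [Monoid M] {g : M} (hg : g ^ 2 = 1) :
    zmodPowHom 2 hg (Multiplicative.ofAdd 1) = g :=
  pow_one g

namespace InfiniteDihedral

open CoprodI

def gen (i : Fin 2) : D := CoprodI.of (i := i) (Multiplicative.ofAdd 1)

theorem gen_zero : gen 0 = genD_a := rfl

theorem gen_one : gen 1 = genD_b := rfl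

theorem eq_ofAdd_one_of_ne_one {m : Multiplicative (ZMod 2)} (hm : m ≠ 1) :
    m = Multiplicative.ofAdd 1 := by
  revert m; decide

theorem Word.prod_eq_altProd (w : Word fun _ : Fin 2 => Multiplicative (ZMod 2)) {s : Fin 2}
    (hs : w.fstIdx ≠ some (s + 1)) : w.prod = altProd gen s w.toList.length := by
  induction w using Word.consRecOn generalizing s with
  | empty => rfl
  | cons i m w hw hm ih =>
    have fin_two_eq : ∀ i s : Fin 2, i ≠ s + 1 → i = s := by decide
    have fin_two_add_one_add_one : ∀ i : Fin 2, i + 1 + 1 = i := by decide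
    obtain rfl := fin_two_eq i s (by simpa using hs)
    obtain rfl := eq_ofAdd_one_of_ne_one hm
    rw [Word.prod_cons, ih (s := i + 1) (by rwa [fin_two_add_one_add_one])]
    rfl

theorem exists_fstIdx_ne (w : Word fun _ : Fin 2 => Multiplicative (ZMod 2)) :
    ∃ s : Fin 2, w.fstIdx ≠ some (s + 1) :=
  ⟨w.fstIdx.getD 0, by generalize w.fstIdx = o; revert o; decide⟩

abbrev abaBabClosure : Subgroup D :=
  Subgroup.closure {genD_a * genD_b * genD_a, genD_b * genD_a * genD_b}

theorem altProd_gen_three_mem (s : Fin 2) : altProd gen s 3 ∈ abaBabClosure := by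
  apply Subgroup.subset_closure
  fin_cases s <;> simp [altProd, genD_a, genD_b, gen, mul_assoc]

theorem altProd_gen_mem_of_dvd (s : Fin 2) {n : ℕ} (hn : 3 ∣ n) :
    altProd gen s n ∈ abaBabClosure := by
  obtain ⟨k, rfl⟩ := hn
  induction k generalizing s with
  | zero => exact one_mem _
  | succ k ih =>
    rw [Nat.mul_succ, add_comm, altProd_add]
    exact mul_mem (altProd_gen_three_mem s) (ih _)

def transposition (i : Fin 2) : Equiv.Perm (Fin 3) := Equiv.swap 0 i.succ

theorem transposition_sq (i : Fin 2) : transposition i ^ 2 = 1 := by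
  revert i; decide

def toPerm : D →* Equiv.Perm (Fin 3) :=
  CoprodI.lift fun i => zmodPowHom 2 (transposition_sq i)

theorem toPerm_gen (i : Fin 2) : toPerm (gen i) = transposition i :=
  (lift_of _ _).trans (zmodPowHom_ofAdd_one _)

theorem toPerm_comp_gen : toPerm ∘ gen = transposition := funext toPerm_gen

theorem abaBabClosure_le_comap_stabilizer :
    abaBabClosure ≤ (MulAction.stabilizer (Equiv.Perm (Fin 3)) (0 : Fin 3)).comap toPerm := by
  rw [Subgroup.closure_le]
  rintro _ (rfl | rfl) <;>
    simp only [SetLike.mem_coe, Subgroup.mem_comap, MulAction.mem_stabilizer_iff, map_mul,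
      ← gen_zero, ← gen_one, toPerm_gen] <;> decide

theorem altProd_transposition_six (s : Fin 2) : altProd transposition s 6 = 1 := by
  revert s; decide

theorem altProd_transposition_mod_six (s : Fin 2) (n : ℕ) :
    altProd transposition s n = altProd transposition s (n % 6) := by
  conv_lhs => rw [← Nat.mod_add_div n 6]
  induction n / 6 with
  | zero => rfl
  | succ k ih =>
    rw [Nat.mul_succ, ← add_assoc, altProd_add, ih, altProd_transposition_six, mul_one]

theorem altProd_transposition_apply_zero_eq_zero_iff (s : Fin 2) (n : ℕ) :
    altProd transposition s n 0 = 0 ↔ 3 ∣ n := by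
  rw [altProd_transposition_mod_six, ← Nat.dvd_mod_iff (by norm_num : 3 ∣ 6)]
  have key : ∀ s : Fin 2, ∀ r < 6, altProd transposition s r 0 = 0 ↔ 3 ∣ r := by decide
  exact key s _ (Nat.mod_lt _ (by norm_num))

theorem dvd_of_altProd_gen_mem (s : Fin 2) {n : ℕ} (h : altProd gen s n ∈ abaBabClosure) :
    3 ∣ n := by
  have h0 := abaBabClosure_le_comap_stabilizer h
  rw [Subgroup.mem_comap, MulAction.mem_stabilizer_iff, map_altProd, toPerm_comp_gen,
    Equiv.Perm.smul_def] at h0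
  exact (altProd_transposition_apply_zero_eq_zero_iff s n).mp h0

end InfiniteDihedral

open InfiniteDihedral in
theorem stmt14 (x : D) :
    x ∈ Subgroup.closure
        ({genD_a * genD_b * genD_a, genD_b * genD_a * genD_b} : Set D) ↔
      3 ∣ (Monoid.CoprodI.Word.equiv x).toList.length := by
  obtain ⟨w, rfl⟩ := CoprodI.Word.equiv.symm.surjective x
  obtain ⟨s, hs⟩ := exists_fstIdx_ne w
  rw [Equiv.apply_symm_apply, show CoprodI.Word.equiv.symm w = w.prod from rfl,
    Word.prod_eq_altProd w hs]
  exact ⟨dvd_of_altProd_gen_mem s, altProd_gen_mem_of_dvd s⟩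
end

section
/- No subgroup of G_k of index 3 is normal: if K is a subgroup of G_k with index 3, then K is not a normal subgroup. -/
/-!
The generators `a_i` are involutions. In the quotient by a normal subgroup of index 3 their images
satisfy `x ^ 2 = 1` and `x ^ 3 = 1`, hence are trivial; so the subgroup contains all generators and
is the whole group, of index 1.
-/

theorem Subgroup.mem_of_pow_mem_of_coprime_index {G : Type*} [Group G] {N : Subgroup G}
    [N.Normal] {n : ℕ} (hn : n.Coprime N.index) {g : G} (hg : g ^ n ∈ N) : g ∈ N := by
  rw [← QuotientGroup.eq_one_iff] at hg ⊢
  have hn' : (g : G ⧸ N) ^ n = 1 := by rwa [← QuotientGroup.mk_pow]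
  have hindex : (g : G ⧸ N) ^ N.index = 1 := pow_card_eq_one'
  simpa [hn.gcd_eq_one] using pow_gcd_eq_one.mpr ⟨hn', hindex⟩

theorem Monoid.CoprodI.eq_top_of_normal_of_coprime_index {ι : Type*} {M : ι → Type*}
    [∀ i, Group (M i)] {n : ℕ} (hM : ∀ i (m : M i), m ^ n = 1) (N : Subgroup (CoprodI M))
    [N.Normal] (hn : n.Coprime N.index) : N = ⊤ := by
  refine (Subgroup.eq_top_iff' N).mpr fun g ↦ ?_
  induction g using Submonoid.induction_of_closure_eq_top_left mclosure_iUnion_range_of with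
  | one => exact N.one_mem
  | mul_left x hx y hy =>
    obtain ⟨i, m, rfl⟩ := Set.mem_iUnion.mp hx
    refine N.mul_mem (N.mem_of_pow_mem_of_coprime_index hn ?_) hy
    rw [← map_pow, hM, map_one]
    exact N.one_mem

theorem stmt18 (k : ℕ) (K : Subgroup (Gk k)) (hK : K.index = 3) :
    ¬ K.Normal := by
  intro hN
  have hsq : ∀ (_ : Fin (k + 1)) (m : Multiplicative (ZMod 2)), m ^ 2 = 1 := fun _ ↦ by decide
  have htop : K = ⊤ :=
    Monoid.CoprodI.eq_top_of_normal_of_coprime_index hsq K (by rw [hK]; decide)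
  rw [htop, Subgroup.index_top] at hK
  omega
end
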